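/- Let r₁, r₂, r₃ > 0 with r₁ + r₂ + r₃ = 1, and fix d_ij = 1 − r_k and d_jk = 1 − r_i (the Euler Resting configuration ER ijk), so that d_ki(π) = 1 + r_j. Regarding 𝓔 as a function of θ alone, its second derivative at θ = π equals −m_k m_i (−H²/I_H(π)² + 1/(1 + r_j)³)(1 − r_k)(1 − r_i), where I_H(π) = m_i m_j (1 − r_k)² + m_j m_k (1 − r_i)² + m_k m_i (1 + r_j)² + I_S. In particular this second derivative is strictly positive (the Euler Resting configuration is energetically stable in θ) if and only if H² > I_H(π)²/(1 + r_j)³. -/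

import Mathlib

/-!
Write `s(θ) = d_ij² + d_jk² − 2 d_ij d_jk cos θ` for the squared third side, so that
`𝓔 = Φ ∘ s` with `Φ(s) = H²/(2(c + m_k m_i s)) − m_k m_i/√s − const`. At `θ = π` the inner
function is critical (`s'(π) = 2 d_ij d_jk sin π = 0`), so the chain rule leaves only
`𝓔''(π) = Φ'(s(π)) s''(π)` with `s''(π) = −2 d_ij d_jk` and `√s(π) = d_ij + d_jk`.
-/

open Filter Topology

/-- Third side from the law of cosines. -/
noncomputable def dki (dij djk θ : ℝ) : ℝ :=
  Real.sqrt (dij ^ 2 + djk ^ 2 - 2 * dij * djk * Real.cos θ)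

/-- Moment of inertia about the rotation axis. -/
noncomputable def IH (mi mj mk IS dij djk θ : ℝ) : ℝ :=
  mi * mj * dij ^ 2 + mj * mk * djk ^ 2 + mk * mi * (dki dij djk θ) ^ 2 + IS

/-- The amended potential `𝓔 = H²/(2 I_H) + U` as a function of
`(d_ij, d_jk, θ)`. -/
noncomputable def amended (mi mj mk IS H dij djk θ : ℝ) : ℝ :=
  H ^ 2 / (2 * IH mi mj mk IS dij djk θ)
    - (mi * mj / dij + mj * mk / djk + mk * mi / dki dij djk θ)

theorem HasDerivAt.mul_continuousAt_of_eq_zero {𝕜 : Type*} [NontriviallyNormedField 𝕜]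
    {f g : 𝕜 → 𝕜} {f' x : 𝕜} (hf : HasDerivAt f f' x) (hfx : f x = 0)
    (hg : ContinuousAt g x) :
    HasDerivAt (fun y => f y * g y) (f' * g x) x := by
  rw [hasDerivAt_iff_tendsto_slope] at hf ⊢
  have hslope : slope (fun y => f y * g y) x = fun y => slope f x y * g y := by
    funext y
    simp only [slope_def_field, hfx, zero_mul, sub_zero]
    ring
  rw [hslope]
  exact hf.mul (hg.tendsto.mono_left nhdsWithin_le_nhds)

theorem hasDerivAt_deriv_comp_of_deriv_eq_zero {Φ Φ' s s' : ℝ → ℝ} {x s'' : ℝ}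
    (hΦ : ∀ᶠ y in 𝓝 x, HasDerivAt Φ (Φ' (s y)) (s y))
    (hs : ∀ᶠ y in 𝓝 x, HasDerivAt s (s' y) y)
    (hs' : HasDerivAt s' s'' x) (hs'x : s' x = 0) (hΦ' : ContinuousAt Φ' (s x)) :
    HasDerivAt (deriv (Φ ∘ s)) (Φ' (s x) * s'') x := by
  have hderiv : deriv (Φ ∘ s) =ᶠ[𝓝 x] fun y => s' y * (Φ' ∘ s) y := by
    filter_upwards [hΦ, hs] with y hΦy hsy
    rw [mul_comm]
    exact (hΦy.comp y hsy).deriv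
  have hcont : ContinuousAt (Φ' ∘ s) x := hΦ'.comp hs.self_of_nhds.continuousAt
  rw [mul_comm]
  exact (hs'.mul_continuousAt_of_eq_zero hs'x hcont).congr_of_eventuallyEq hderiv

section AmendedPotential

variable (mi mj mk IS H a b : ℝ)

noncomputable def inertiaOfSq (s : ℝ) : ℝ :=
  mi * mj * a ^ 2 + mj * mk * b ^ 2 + mk * mi * s + IS

noncomputable def amendedOfSq (s : ℝ) : ℝ :=
  H ^ 2 / (2 * inertiaOfSq mi mj mk IS a b s) - (mi * mj / a + mj * mk / b + mk * mi / √s)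

noncomputable def amendedOfSqDeriv (s : ℝ) : ℝ :=
  -(H ^ 2 * (mk * mi)) / (2 * inertiaOfSq mi mj mk IS a b s ^ 2) + mk * mi / (2 * (s * √s))

theorem hasDerivAt_amendedOfSq {s : ℝ} (hs : 0 < s) (hI : inertiaOfSq mi mj mk IS a b s ≠ 0) :
    HasDerivAt (amendedOfSq mi mj mk IS H a b) (amendedOfSqDeriv mi mj mk IS H a b s) s := by
  have hinertia : HasDerivAt (inertiaOfSq mi mj mk IS a b) (mk * mi) s :=
    ((((hasDerivAt_id s).const_mul (mk * mi)).const_add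
      (mi * mj * a ^ 2 + mj * mk * b ^ 2)).add_const IS).congr_deriv (mul_one _)
  have hsqrt : √s ≠ 0 := (Real.sqrt_pos.mpr hs).ne'
  have h := ((hasDerivAt_const s (H ^ 2)).div (hinertia.const_mul 2) (by simpa using hI)).sub
    (((hasDerivAt_const s (mk * mi)).div (Real.hasDerivAt_sqrt hs.ne') hsqrt).const_add
      (mi * mj / a + mj * mk / b))
  refine h.congr_deriv ?_
  simp only [amendedOfSqDeriv, Real.sq_sqrt hs.le]
  field_simp
  ring

theorem continuousAt_amendedOfSqDeriv {s : ℝ} (hs : 0 < s)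
    (hI : inertiaOfSq mi mj mk IS a b s ≠ 0) :
    ContinuousAt (amendedOfSqDeriv mi mj mk IS H a b) s := by
  unfold amendedOfSqDeriv inertiaOfSq at *
  fun_prop (disch := first | positivity | simpa using hI)

theorem amended_eq_amendedOfSq (hab : 0 ≤ a * b) (θ : ℝ) :
    amended mi mj mk IS H a b θ =
      amendedOfSq mi mj mk IS H a b (a ^ 2 + b ^ 2 - 2 * a * b * Real.cos θ) := by
  have hs : 0 ≤ a ^ 2 + b ^ 2 - 2 * a * b * Real.cos θ := by
    nlinarith [sq_nonneg (a - b), mul_le_mul_of_nonneg_left (Real.cos_le_one θ) hab]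
  simp only [amended, IH, dki, amendedOfSq, inertiaOfSq, Real.sq_sqrt hs]

theorem hasDerivAt_deriv_amended_pi (hmi : 0 < mi) (hmj : 0 < mj) (hmk : 0 < mk)
    (hIS : 0 ≤ IS) (ha : 0 < a) (hb : 0 < b) :
    HasDerivAt (deriv fun θ => amended mi mj mk IS H a b θ)
      (-(mk * mi) * (-(H ^ 2) / (mi * mj * a ^ 2 + mj * mk * b ^ 2 + mk * mi * (a + b) ^ 2 + IS) ^ 2
        + 1 / (a + b) ^ 3) * a * b) Real.pi := by
  set s : ℝ → ℝ := fun θ => a ^ 2 + b ^ 2 - 2 * a * b * Real.cos θ with hs_def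
  have hE : (fun θ => amended mi mj mk IS H a b θ) = amendedOfSq mi mj mk IS H a b ∘ s :=
    funext (amended_eq_amendedOfSq mi mj mk IS H a b (mul_pos ha hb).le)
  have hs_pi : s Real.pi = (a + b) ^ 2 := by
    simp only [hs_def, Real.cos_pi]
    ring
  have hinertia {x : ℝ} (hx : 0 < x) : inertiaOfSq mi mj mk IS a b x ≠ 0 := by
    unfold inertiaOfSq
    positivity
  have hs_pos : ∀ᶠ θ in 𝓝 Real.pi, 0 < s θ :=
    continuousAt_const.eventually_lt (by fun_prop : Continuous s).continuousAt
      (by rw [hs_pi]; positivity)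
  have h := hasDerivAt_deriv_comp_of_deriv_eq_zero (s' := fun θ => 2 * a * b * Real.sin θ)
    (hs_pos.mono fun θ hθ => hasDerivAt_amendedOfSq mi mj mk IS H a b hθ (hinertia hθ))
    (Eventually.of_forall fun θ =>
      (((Real.hasDerivAt_cos θ).const_mul (2 * a * b)).const_sub (a ^ 2 + b ^ 2)).congr_deriv
        (by ring))
    ((Real.hasDerivAt_sin Real.pi).const_mul (2 * a * b)) (by simp)
    (continuousAt_amendedOfSqDeriv mi mj mk IS H a b (by rw [hs_pi]; positivity)
      (hinertia (by rw [hs_pi]; positivity)))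
  rw [hE]
  convert h using 1
  have hab : 0 < a + b := add_pos ha hb
  simp only [hs_pi, amendedOfSqDeriv, inertiaOfSq, Real.sqrt_sq hab.le, Real.cos_pi]
  field_simp

end AmendedPotential

theorem second_variation_pos_iff {κ x I d a b : ℝ} (hκ : 0 < κ) (hI : I ≠ 0) (hd : 0 < d)
    (ha : 0 < a) (hb : 0 < b) :
    0 < -κ * (-x / I ^ 2 + 1 / d ^ 3) * a * b ↔ I ^ 2 / d ^ 3 < x := by
  have hform : -κ * (-x / I ^ 2 + 1 / d ^ 3) * a * b = κ * a * b * (x / I ^ 2 - 1 / d ^ 3) := by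
    ring
  rw [hform, mul_pos_iff_of_pos_left (by positivity), sub_pos, div_lt_div_iff₀ (by positivity)
    (by positivity), one_mul, div_lt_iff₀ (by positivity), mul_comm]

theorem euler_resting_second_variation_general
    (mi mj mk IS H ri rj rk : ℝ)
    (hmi : 0 < mi) (hmj : 0 < mj) (hmk : 0 < mk) (hIS : 0 < IS)
    (hri : 0 < ri) (hrj : 0 < rj) (hrk : 0 < rk) (hsum : ri + rj + rk = 1) :
    deriv (deriv (fun t => amended mi mj mk IS H (1 - rk) (1 - ri) t)) Real.pi =
        -(mk * mi) *
          (-(H ^ 2) /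
              (mi * mj * (1 - rk) ^ 2 + mj * mk * (1 - ri) ^ 2 +
                  mk * mi * (1 + rj) ^ 2 + IS) ^ 2 +
            1 / (1 + rj) ^ 3) * (1 - rk) * (1 - ri) ∧
      (0 < deriv (deriv (fun t => amended mi mj mk IS H (1 - rk) (1 - ri) t)) Real.pi ↔
        (mi * mj * (1 - rk) ^ 2 + mj * mk * (1 - ri) ^ 2 +
            mk * mi * (1 + rj) ^ 2 + IS) ^ 2 / (1 + rj) ^ 3 < H ^ 2) := by
  have ha : 0 < 1 - rk := by linarith
  have hb : 0 < 1 - ri := by linarith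
  have hab : 1 - rk + (1 - ri) = 1 + rj := by linarith
  have h := hasDerivAt_deriv_amended_pi mi mj mk IS H (1 - rk) (1 - ri) hmi hmj hmk hIS.le ha hb
  rw [hab] at h
  rw [h.deriv]
  exact ⟨rfl, second_variation_pos_iff (mul_pos hmk hmi) (by positivity) (by positivity) ha hb⟩

/-- Second variation in `θ` of the amended potential at the Euler Resting
configuration ER`ijk` (`d_ij = 1 − r_k`, `d_jk = 1 − r_i`, `θ = π`, so
`d_ki = 1 + r_j`): it equals
`−m_k m_i (−H²/I_H(π)² + 1/(1+r_j)³)(1 − r_k)(1 − r_i)`, and is strictly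
positive (energetic stability in `θ`) iff `H² > I_H(π)²/(1+r_j)³`. -/
theorem euler_resting_second_variation
    (mi mj mk IS H ri rj rk : ℝ)
    (hmi : 0 < mi) (hmj : 0 < mj) (hmk : 0 < mk) (hIS : 0 < IS) (hH : 0 ≤ H)
    (hri : 0 < ri) (hrj : 0 < rj) (hrk : 0 < rk) (hsum : ri + rj + rk = 1) :
    deriv (deriv (fun t => amended mi mj mk IS H (1 - rk) (1 - ri) t)) Real.pi =
        -(mk * mi) *
          (-(H ^ 2) /
              (mi * mj * (1 - rk) ^ 2 + mj * mk * (1 - ri) ^ 2 +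
                  mk * mi * (1 + rj) ^ 2 + IS) ^ 2 +
            1 / (1 + rj) ^ 3) * (1 - rk) * (1 - ri) ∧
      (0 < deriv (deriv (fun t => amended mi mj mk IS H (1 - rk) (1 - ri) t)) Real.pi ↔
        (mi * mj * (1 - rk) ^ 2 + mj * mk * (1 - ri) ^ 2 +
            mk * mi * (1 + rj) ^ 2 + IS) ^ 2 / (1 + rj) ^ 3 < H ^ 2) :=
  euler_resting_second_variation_general mi mj mk IS H ri rj rk hmi hmj hmk hIS hri hrj hrk hsum
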